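/- arXiv:2502.01864 — 8 statements merged into one kernel-verified Lean document; each statement's English description precedes it below -/
import Mathlib

section
/- Let q = 2^t, let K ⊆ F_q be a subfield with |K| = n, and let β_A, β_B, β_C ∈ F_q satisfy Δ_B := β_B − β_A ∈ K and Δ_C := β_C − β_A ∈ K. Suppose Γ : K → F_q satisfies f(β_A) + Σ_{x ∈ K} Γ(x) f(x) = 0 for every polynomial f ∈ F_q[X] with deg f < n. Then for every m with 3(m − 1) < n and all polynomials p, r, s ∈ F_q[X] of degree < m, Σ_{x ∈ K} Γ(x) · p(x) · r(x + Δ_B) · s(x + Δ_C) = p(β_A) · r(β_B) · s(β_C). -/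
/-! Apply the hypothesis on `Γ` to `f(X) = p(X) r(X + Δ_B) s(X + Δ_C)`, whose degree is at most
`3(m - 1) < n`. Since `β_A + Δ_B = β_B` and `β_A + Δ_C = β_C`, this gives
`p(β_A) r(β_B) s(β_C) + ∑ Γ(x) p(x) r(x + Δ_B) s(x + Δ_C) = 0`, and in characteristic `2`
the two terms are equal. -/

open Polynomial

namespace Polynomial

variable {R : Type*} [Semiring R]

theorem natDegree_le_sub_one_of_degree_lt {p : R[X]} {m : ℕ} (h : p.degree < m) :
    p.natDegree ≤ m - 1 := by
  rcases eq_or_ne p 0 with rfl | hp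
  · simp
  · have := (natDegree_lt_iff_degree_lt hp).2 h
    omega

theorem degree_mul_mul_lt {p q r : R[X]} {m n : ℕ} (hp : p.degree < m) (hq : q.degree < m)
    (hr : r.degree < m) (hmn : 3 * (m - 1) < n) : (p * q * r).degree < n := by
  have hnat : (p * q * r).natDegree ≤ 3 * (m - 1) := calc
    (p * q * r).natDegree ≤ p.natDegree + q.natDegree + r.natDegree :=
      natDegree_mul_le.trans (Nat.add_le_add_right natDegree_mul_le _)
    _ ≤ 3 * (m - 1) := by
      have := natDegree_le_sub_one_of_degree_lt hp
      have := natDegree_le_sub_one_of_degree_lt hq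
      have := natDegree_le_sub_one_of_degree_lt hr
      omega
  exact degree_le_natDegree.trans_lt (by exact_mod_cast hnat.trans_lt hmn)

end Polynomial

theorem stmt3_general (F : Type*) [Field F] [Fintype F] (t : ℕ)
    (hq : Fintype.card F = 2 ^ t)
    (K : Subfield F) [Fintype K] (n : ℕ)
    (βA βB βC : F)
    (Γ : K → F)
    (hΓ : ∀ f : Polynomial F, f.degree < ((n : ℕ) : WithBot ℕ) →
      f.eval βA + ∑ x : K, Γ x * f.eval (x : F) = 0)
    (m : ℕ) (hm : 3 * (m - 1) < n)
    (p r s : Polynomial F)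
    (hp : p.degree < ((m : ℕ) : WithBot ℕ))
    (hr : r.degree < ((m : ℕ) : WithBot ℕ))
    (hs : s.degree < ((m : ℕ) : WithBot ℕ)) :
    ∑ x : K, Γ x * p.eval (x : F) * r.eval ((x : F) + (βB - βA))
        * s.eval ((x : F) + (βC - βA))
      = p.eval βA * r.eval βB * s.eval βC := by
  have : CharP F 2 := charP_of_card_eq_prime_pow hq
  have key := hΓ (p * taylor (βB - βA) r * taylor (βC - βA) s)
    (degree_mul_mul_lt hp (by rwa [degree_taylor]) (by rwa [degree_taylor]) hm)
  simp only [eval_mul, taylor_eval, add_sub_cancel, ← mul_assoc] at key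
  exact (CharTwo.add_eq_zero.1 key).symm

/-- Let `q = 2^t`, `K ⊆ F_q` a subfield of order `n`, and
`β_A, β_B, β_C ∈ F_q` with `β_B - β_A ∈ K` and `β_C - β_A ∈ K`. Suppose
`Γ : K → F_q` satisfies `f(β_A) + ∑_{x ∈ K} Γ(x) f(x) = 0` for every polynomial
`f` of degree `< n`. Then for every `m` with `3(m-1) < n` and all polynomials
`p, r, s` of degree `< m`,
`∑_{x ∈ K} Γ(x) p(x) r(x + Δ_B) s(x + Δ_C) = p(β_A) r(β_B) s(β_C)`
where `Δ_B = β_B - β_A` and `Δ_C = β_C - β_A`. -/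
theorem stmt3 (F : Type*) [Field F] [Fintype F] (t : ℕ)
    (hq : Fintype.card F = 2 ^ t)
    (K : Subfield F) [Fintype K] (n : ℕ) (hn : Fintype.card K = n)
    (βA βB βC : F) (hB : βB - βA ∈ K) (hC : βC - βA ∈ K)
    (Γ : K → F)
    (hΓ : ∀ f : Polynomial F, f.degree < ((n : ℕ) : WithBot ℕ) →
      f.eval βA + ∑ x : K, Γ x * f.eval (x : F) = 0)
    (m : ℕ) (hm : 3 * (m - 1) < n)
    (p r s : Polynomial F)
    (hp : p.degree < ((m : ℕ) : WithBot ℕ))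
    (hr : r.degree < ((m : ℕ) : WithBot ℕ))
    (hs : s.degree < ((m : ℕ) : WithBot ℕ)) :
    ∑ x : K, Γ x * p.eval (x : F) * r.eval ((x : F) + (βB - βA))
        * s.eval ((x : F) + (βC - βA))
      = p.eval βA * r.eval βB * s.eval βC :=
  stmt3_general F t hq K n βA βB βC Γ hΓ m hm p r s hp hr hs
end

section
/- Let G be an m×n matrix over a finite field F_q with rows g^1, …, g^m, let k ≤ m, Γ ∈ F_q^n, τ ∈ (F_q ∖ {0})^k, and ℓ̄ ≥ 2. If G has the ℓ̄-orthogonality property with respect to (Γ, τ), then for every ℓ with 1 ≤ ℓ < ℓ̄, G has the addressable ℓ-orthogonality property with respect to τ; explicitly, for each A ∈ [k] the vector Γ^A := Γ ⋆ g^A ⋆ ⋯ ⋆ g^A (componentwise product with ℓ̄ − ℓ copies of g^A) is a valid witness. -/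
/-- `G` (with rows `g 1, …, g m`) has the `ℓ`-orthogonality property with respect to
`(Γ, τ)`: for all `a_1, …, a_ℓ ∈ [m]`, `∑ i, Γ i * g (a 1) i * ⋯ * g (a ℓ) i` equals
`τ A` when `a_1 = ⋯ = a_ℓ = A` for some `A ∈ [k]`, and `0` otherwise. -/
def OrthoProp {F : Type*} [Field F] {m n k : ℕ} (hk : k ≤ m)
    (g : Fin m → Fin n → F) (Γ : Fin n → F) (τ : Fin k → F) (ℓ : ℕ) : Prop :=
  ∀ a : Fin ℓ → Fin m,
    (∀ A : Fin k, (∀ j, a j = Fin.castLE hk A) →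
      ∑ i, Γ i * ∏ j, g (a j) i = τ A) ∧
    ((¬ ∃ A : Fin k, ∀ j, a j = Fin.castLE hk A) →
      ∑ i, Γ i * ∏ j, g (a j) i = 0)

/-- The family `Γ A`, `A ∈ [k]`, witnesses the addressable `ℓ`-orthogonality property
of `G` with respect to `τ`: for each `A ∈ [k]` and all `a_1, …, a_ℓ ∈ [m]`,
`∑ i, Γ A i * g (a 1) i * ⋯ * g (a ℓ) i` equals `τ A` when `a_1 = ⋯ = a_ℓ = A`,
and `0` otherwise. -/
def AddrWitness {F : Type*} [Field F] {m n k : ℕ} (hk : k ≤ m)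
    (g : Fin m → Fin n → F) (τ : Fin k → F) (ℓ : ℕ)
    (Γ : Fin k → Fin n → F) : Prop :=
  ∀ A : Fin k, ∀ a : Fin ℓ → Fin m,
    ((∀ j, a j = Fin.castLE hk A) →
      ∑ i, Γ A i * ∏ j, g (a j) i = τ A) ∧
    ((¬ ∀ j, a j = Fin.castLE hk A) →
      ∑ i, Γ A i * ∏ j, g (a j) i = 0)

/-- If `G` has the `ℓ̄`-orthogonality property with respect to
`(Γ, τ)` (`ℓ̄ ≥ 2`), then for every `1 ≤ ℓ < ℓ̄`, `G` has the addressable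
`ℓ`-orthogonality property with respect to `τ`, witnessed for each `A ∈ [k]` by
`Γ^A = Γ ⋆ g^A ⋆ ⋯ ⋆ g^A` (componentwise product with `ℓ̄ - ℓ` copies of `g^A`). -/
theorem stmt6 (F : Type*) [Field F] [Fintype F] (m n k ℓbar : ℕ) (hk : k ≤ m)
    (hℓbar : 2 ≤ ℓbar) (g : Fin m → Fin n → F) (Γ : Fin n → F) (τ : Fin k → F)
    (hτ : ∀ A, τ A ≠ 0) (hG : OrthoProp hk g Γ τ ℓbar) :
    ∀ ℓ, 1 ≤ ℓ → ℓ < ℓbar →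
      AddrWitness hk g τ ℓ
        (fun A i => Γ i * (g (Fin.castLE hk A) i) ^ (ℓbar - ℓ)) := by
  intro ℓ hℓ1 hℓlt A a
  have e : ℓ + (ℓbar - ℓ) = ℓbar := Nat.add_sub_cancel' hℓlt.le
  set a' : Fin ℓbar → Fin m := fun j =>
    Fin.addCases (motive := fun _ => Fin m) a (fun _ => Fin.castLE hk A) (Fin.cast e.symm j)
    with ha'
  have haddc : ∀ j : Fin (ℓ + (ℓbar - ℓ)), a' (Fin.cast e j)
      = Fin.addCases (motive := fun _ => Fin m) a (fun _ => Fin.castLE hk A) j := by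
    intro j
    have h1 : Fin.cast e.symm (Fin.cast e j) = j := by ext; simp
    rw [ha']; dsimp only; rw [h1]
  have hsum : ∑ i, (Γ i * (g (Fin.castLE hk A) i) ^ (ℓbar - ℓ)) * ∏ j, g (a j) i
      = ∑ i, Γ i * ∏ j, g (a' j) i := by
    refine Finset.sum_congr rfl fun i _ => ?_
    have hprod : ∏ j, g (a' j) i
        = (∏ j : Fin ℓ, g (a j) i) * (g (Fin.castLE hk A) i) ^ (ℓbar - ℓ) := by
      rw [← Fin.prod_congr' (fun j => g (a' j) i) e]
      simp only [haddc, Fin.prod_univ_add, Fin.addCases_left, Fin.addCases_right,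
        Finset.prod_const, Finset.card_univ, Fintype.card_fin]
    rw [hprod]; ring
  have hpos : 0 < ℓbar - ℓ := Nat.sub_pos_of_lt hℓlt
  have hsurj : ∀ j : Fin ℓbar, ∃ j', j = Fin.cast e j' :=
    fun j => ⟨Fin.cast e.symm j, by ext; simp⟩
  have hextra : a' (Fin.cast e (Fin.natAdd ℓ ⟨0, hpos⟩)) = Fin.castLE hk A := by
    rw [haddc, Fin.addCases_right]
  have hcast : ∀ j : Fin ℓ, a' (Fin.cast e (Fin.castAdd (ℓbar - ℓ) j)) = a j := by
    intro j; rw [haddc, Fin.addCases_left]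
  constructor
  · intro hall
    rw [hsum]
    refine (hG a').1 A ?_
    intro j
    obtain ⟨j', rfl⟩ := hsurj j
    rw [haddc]
    induction j' using Fin.addCases with
    | left j'' => simpa [Fin.addCases_left] using hall j''
    | right j'' => simp [Fin.addCases_right]
  · intro hnot
    rw [hsum]
    refine (hG a').2 ?_
    rintro ⟨B, hB⟩
    have hAB : A = B := by
      have := hB (Fin.cast e (Fin.natAdd ℓ ⟨0, hpos⟩))
      rw [hextra] at this
      exact Fin.castLE_injective hk this
    exact hnot fun j => by rw [← hcast j, hB, ← hAB]
end

section
/- Let G be an m×n matrix over a finite field F_q with rows g^1, …, g^m, let k ≤ m, Γ ∈ F_q^n, τ ∈ (F_q ∖ {0})^k, and ℓ̄ ≥ 1. If G has the strong (ℓ̄+1)-orthogonality property with respect to (Γ, τ), then G has the addressable strong ℓ̄-orthogonality property with respect to τ; explicitly, for each A ∈ [k] the vector Γ^A := Γ ⋆ g^A (componentwise product) is a valid witness. -/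
/-- If `G` has the strong `(ℓ̄+1)`-orthogonality property with respect
to `(Γ, τ)` (`ℓ̄ ≥ 1`), then `G` has the addressable strong `ℓ̄`-orthogonality property
with respect to `τ`, witnessed for each `A ∈ [k]` by `Γ^A = Γ ⋆ g^A`
(componentwise product). -/
theorem stmt7 (F : Type*) [Field F] [Fintype F] (m n k ℓbar : ℕ) (hk : k ≤ m)
    (hℓbar : 1 ≤ ℓbar) (g : Fin m → Fin n → F) (Γ : Fin n → F) (τ : Fin k → F)
    (hτ : ∀ A, τ A ≠ 0)
    (hG : ∀ ℓ, 1 ≤ ℓ → ℓ ≤ ℓbar + 1 → OrthoProp hk g Γ τ ℓ) :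
    ∀ ℓ, 1 ≤ ℓ → ℓ ≤ ℓbar →
      AddrWitness hk g τ ℓ (fun A i => Γ i * g (Fin.castLE hk A) i) := by
  intro ℓ hℓ1 hℓ2 A a
  have hsum : ∑ i, (Γ i * g (Fin.castLE hk A) i) * ∏ j, g (a j) i
      = ∑ i, Γ i * ∏ j, g ((Fin.cons (Fin.castLE hk A) a : Fin (ℓ+1) → Fin m) j) i := by
    refine Finset.sum_congr rfl fun i _ => ?_
    rw [Fin.prod_univ_succ]
    simp
    ring
  have hG' := hG (ℓ + 1) (by omega) (by omega) (Fin.cons (Fin.castLE hk A) a)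
  constructor
  · intro hall
    have := hG'.1 A (fun j => by
      refine Fin.cases ?_ ?_ j
      · simp
      · intro j'; simpa using hall j')
    simpa [hsum] using this
  · intro hnot
    have := hG'.2 (by
      rintro ⟨B, hB⟩
      have h0 : Fin.castLE hk A = Fin.castLE hk B := by simpa using hB 0
      have hAB : A = B := by
        have := Fin.castLE_injective hk h0
        exact this
      apply hnot
      intro j
      have := hB j.succ
      simpa [hAB] using this)
    simpa [hsum] using this
end

section
/- Let G be an m×n matrix over a finite field F_q with rows g^1, …, g^m, let k ≤ m, Γ ∈ F_q^n, τ ∈ (F_q ∖ {0})^k, and ℓ ≥ 2. If G has the ℓ-orthogonality property with respect to (Γ, τ), then for every c ∈ F_q^m with Σ_{a=1}^m c_a g^a = 0 one has c_A = 0 for all A ∈ [k]. In particular, the first k rows g^1, …, g^k are linearly independent and their span intersects the span of g^{k+1}, …, g^m only in 0. -/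
theorem Fintype.sum_extend_zero_smul {R M ι κ : Type*} [Semiring R] [AddCommMonoid M]
    [Module R M] [Fintype ι] [Fintype κ] {v : ι → M} {e : κ → ι} (he : Function.Injective e)
    (d : κ → R) : ∑ a, Function.extend e d 0 a • v a = ∑ A, d A • v (e A) := by
  refine (Fintype.sum_of_injective e he _ _ (fun a ha => ?_) fun A => by
    rw [he.extend_apply]).symm
  rw [Function.extend_apply' _ _ _ ha, Pi.zero_apply, zero_smul]

section LinearRelations

variable {R M ι κ κ' : Type*} [Ring R] [AddCommGroup M] [Module R M] [Fintype ι] [Fintype κ]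
  [Fintype κ'] {v : ι → M}

variable {e : κ → ι} (he : Function.Injective e)
  (hv : ∀ c : ι → R, ∑ a, c a • v a = 0 → ∀ A, c (e A) = 0)
include he hv

theorem linearIndependent_comp_of_coeff_eq_zero : LinearIndependent R (v ∘ e) := by
  refine Fintype.linearIndependent_iff.2 fun d hd A => ?_
  have := hv (Function.extend e d 0) (by rwa [Fintype.sum_extend_zero_smul he]) A
  rwa [he.extend_apply] at this

theorem span_inf_span_eq_bot_of_coeff_eq_zero {e' : κ' → ι} (he' : Function.Injective e')
    (hdisj : ∀ A B, e A ≠ e' B) :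
    Submodule.span R (Set.range (v ∘ e)) ⊓ Submodule.span R (Set.range (v ∘ e')) = ⊥ := by
  refine eq_bot_iff.2 fun x hx => ?_
  rw [Submodule.mem_inf, Submodule.mem_span_range_iff_exists_fun,
    Submodule.mem_span_range_iff_exists_fun] at hx
  obtain ⟨⟨d, rfl⟩, ⟨d', hd'⟩⟩ := hx
  have hc : ∑ a, (Function.extend e d 0 - Function.extend e' d' 0) a • v a = 0 := by
    simp only [Pi.sub_apply, sub_smul, Finset.sum_sub_distrib,
      Fintype.sum_extend_zero_smul he, Fintype.sum_extend_zero_smul he']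
    exact sub_eq_zero.2 hd'.symm
  have hd : ∀ A, d A = 0 := fun A => by
    have := hv _ hc A
    rwa [Pi.sub_apply, he.extend_apply,
      Function.extend_apply' _ _ _ fun ⟨B, hB⟩ => hdisj A B hB.symm, Pi.zero_apply, sub_zero] at this
  simp [hd]

end LinearRelations

section Orthogonality

variable {F : Type*} [Field F] {m n k ℓ : ℕ} {hk : k ≤ m} {g : Fin m → Fin n → F}
  {Γ : Fin n → F} {τ : Fin k → F}

theorem OrthoProp.sum_mul_mul_pow (hG : OrthoProp hk g Γ τ (ℓ + 2)) (a : Fin m) (A : Fin k) :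
    ∑ i, Γ i * (g a i * g (Fin.castLE hk A) i ^ (ℓ + 1)) =
      if a = Fin.castLE hk A then τ A else 0 := by
  have hprod : ∀ i, ∏ j, g ((Fin.cons a fun _ => Fin.castLE hk A : Fin (ℓ + 2) → Fin m) j) i =
      g a i * g (Fin.castLE hk A) i ^ (ℓ + 1) := fun i => by
    simp [Fin.prod_univ_succ]
  simp_rw [← hprod]
  split_ifs with h
  · exact (hG _).1 A (Fin.cases h fun _ => rfl)
  · refine (hG _).2 fun ⟨B, hB⟩ => h ?_
    simpa using (hB 0).trans (hB (Fin.succ 0)).symm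

theorem OrthoProp.coeff_eq_zero_of_sum_smul_eq_zero (hG : OrthoProp hk g Γ τ ℓ) (hℓ : 2 ≤ ℓ)
    {c : Fin m → F} (hc : ∑ a, c a • g a = 0) {A : Fin k} (hτ : τ A ≠ 0) :
    c (Fin.castLE hk A) = 0 := by
  obtain ⟨ℓ, rfl⟩ : ∃ ℓ', ℓ = ℓ' + 2 := ⟨ℓ - 2, by omega⟩
  have hrow : ∀ i, ∑ a, c a * g a i = 0 := fun i => by simpa using congrFun hc i
  refine (mul_eq_zero.1 ?_).resolve_right hτ
  calc c (Fin.castLE hk A) * τ A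
      = ∑ a, c a * ∑ i, Γ i * (g a i * g (Fin.castLE hk A) i ^ (ℓ + 1)) := by
        simp only [hG.sum_mul_mul_pow, mul_ite, mul_zero, Finset.sum_ite_eq', Finset.mem_univ,
          if_true]
    _ = ∑ i, Γ i * g (Fin.castLE hk A) i ^ (ℓ + 1) * ∑ a, c a * g a i := by
        simp_rw [Finset.mul_sum]
        rw [Finset.sum_comm]
        exact Finset.sum_congr rfl fun _ _ => Finset.sum_congr rfl fun _ _ => by ring
    _ = 0 := by simp [hrow]

end Orthogonality

/-- If `G` has the `ℓ`-orthogonality property with respect to `(Γ, τ)`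
(`ℓ ≥ 2`), then every linear relation `∑ a, c a • g a = 0` among the rows has
`c A = 0` for all `A ∈ [k]`. In particular, the first `k` rows are linearly
independent and their span meets the span of the remaining rows only in `0`. -/
theorem stmt8 (F : Type*) [Field F] (m n k ℓ : ℕ) (hk : k ≤ m)
    (hℓ : 2 ≤ ℓ) (g : Fin m → Fin n → F) (Γ : Fin n → F) (τ : Fin k → F)
    (hτ : ∀ A, τ A ≠ 0) (hG : OrthoProp hk g Γ τ ℓ) :
    (∀ c : Fin m → F, ∑ a, c a • g a = 0 → ∀ A : Fin k, c (Fin.castLE hk A) = 0) ∧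
    LinearIndependent F (fun A : Fin k => g (Fin.castLE hk A)) ∧
    Submodule.span F (Set.range fun A : Fin k => g (Fin.castLE hk A)) ⊓
        Submodule.span F
          (Set.range fun b : Fin (m - k) =>
            g ⟨k + (b : ℕ), by have := b.isLt; omega⟩) = ⊥ := by
  have hrel : ∀ c : Fin m → F, ∑ a, c a • g a = 0 → ∀ A : Fin k, c (Fin.castLE hk A) = 0 :=
    fun c hc A => hG.coeff_eq_zero_of_sum_smul_eq_zero hℓ hc (hτ A)
  have hinj : Function.Injective (Fin.castLE hk) := Fin.castLE_injective hk
  refine ⟨hrel, linearIndependent_comp_of_coeff_eq_zero hinj hrel,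
    span_inf_span_eq_bot_of_coeff_eq_zero hinj hrel ?_ ?_⟩
  · intro b b' h
    exact Fin.ext (by simpa using congrArg Fin.val h)
  · intro A b h
    have : (A : ℕ) = k + b := congrArg Fin.val h
    omega
end

section
/- Let G be an m×n matrix over a finite field F_q with rows g^1, …, g^m, let k ≤ m, τ ∈ (F_q ∖ {0})^k, and ℓ̄ ≥ 1. Suppose G has the addressable strong ℓ̄-orthogonality property with respect to τ, with witness vectors Γ^A for A ∈ [k]. Then for every e ≥ 1, all vectors u^{(1)}, …, u^{(e)} ∈ F_q^m, and all natural numbers d_1, …, d_e with 1 ≤ d_1 + ⋯ + d_e ≤ ℓ̄, setting f^{(p)}_i = Σ_{a=1}^m u^{(p)}_a g^a_i for each p ∈ [e], one has Σ_{i=1}^n Γ^A_i · ∏_{p=1}^e (f^{(p)}_i)^{d_p} = τ_A · ∏_{p=1}^e (u^{(p)}_A)^{d_p} for every A ∈ [k]. -/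
lemma key {F : Type*} [Field F] {m n k : ℕ} (hk : k ≤ m)
    (g : Fin m → Fin n → F) (τ : Fin k → F) (Γ : Fin k → Fin n → F)
    {ℓ : ℕ} (hℓ : 1 ≤ ℓ) (hW : AddrWitness hk g τ ℓ Γ)
    (v : Fin ℓ → Fin m → F) (A : Fin k) :
    ∑ i, Γ A i * ∏ j, (∑ a, v j a * g a i)
      = τ A * ∏ j, v j (Fin.castLE hk A) := by
  have expand : ∀ i, ∏ j, (∑ a, v j a * g a i)
      = ∑ a ∈ Finset.univ.pi (fun _ : Fin ℓ => (Finset.univ : Finset (Fin m))),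
          (∏ j, v j (a j (Finset.mem_univ j))) * ∏ j, g (a j (Finset.mem_univ j)) i := by
    intro i
    rw [Finset.prod_sum]
    refine Finset.sum_congr rfl (fun a _ => ?_)
    rw [← Finset.prod_mul_distrib]
    exact Finset.prod_attach Finset.univ (fun x => v x (a x (Finset.mem_univ x)) * g (a x (Finset.mem_univ x)) i)
  simp only [expand, Finset.mul_sum]
  rw [Finset.sum_comm]
  have : ∀ a ∈ Finset.univ.pi (fun _ : Fin ℓ => (Finset.univ : Finset (Fin m))),
      ∑ i, Γ A i * ((∏ j, v j (a j (Finset.mem_univ j))) * ∏ j, g (a j (Finset.mem_univ j)) i)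
      = (∏ j, v j (a j (Finset.mem_univ j))) * ∑ i, Γ A i * ∏ j, g (a j (Finset.mem_univ j)) i := by
    intro a _
    rw [Finset.mul_sum]; exact Finset.sum_congr rfl (fun i _ => by ring)
  rw [Finset.sum_congr rfl this]
  rw [Finset.sum_eq_single (fun _ _ => Fin.castLE hk A)]
  · rw [(hW A _).1 (fun j => rfl)]; ring
  · intro a _ hne
    rw [(hW A (fun j => a j (Finset.mem_univ j))).2, mul_zero]
    intro h
    exact hne (by funext j hj; exact h j)
  · intro h; exact absurd (Finset.mem_pi.mpr (fun j _ => Finset.mem_univ _)) h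

/-- If `G` has the addressable strong `ℓ̄`-orthogonality property
with respect to `τ`, witnessed by the single family `Γ A` for `A ∈ [k]`, then for
every `e ≥ 1`, all `u⁽¹⁾, …, u⁽ᵉ⁾ ∈ F^m`, and all exponents `d p` with
`1 ≤ ∑ p, d p ≤ ℓ̄`, setting `f⁽ᵖ⁾ i = ∑ a, u⁽ᵖ⁾ a * g a i`, one has
`∑ i, Γ A i * ∏ p, (f⁽ᵖ⁾ i)^(d p) = τ A * ∏ p, (u⁽ᵖ⁾ A)^(d p)` for every
`A ∈ [k]`. -/
theorem stmt11 (F : Type*) [Field F] [Fintype F] (m n k ℓbar : ℕ) (hk : k ≤ m)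
    (hℓbar : 1 ≤ ℓbar) (g : Fin m → Fin n → F) (τ : Fin k → F) (hτ : ∀ A, τ A ≠ 0)
    (Γ : Fin k → Fin n → F)
    (hG : ∀ ℓ, 1 ≤ ℓ → ℓ ≤ ℓbar → AddrWitness hk g τ ℓ Γ) :
    ∀ e : ℕ, 1 ≤ e → ∀ u : Fin e → Fin m → F, ∀ d : Fin e → ℕ,
      1 ≤ ∑ p, d p → ∑ p, d p ≤ ℓbar → ∀ A : Fin k,
        ∑ i, Γ A i * ∏ p, (∑ a, u p a * g a i) ^ d p
          = τ A * ∏ p, (u p (Fin.castLE hk A)) ^ d p := by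
  intro e he u d hd1 hd2 A
  let σ : Fin (∑ p, d p) ≃ Σ p : Fin e, Fin (d p) :=
    (Fintype.equivOfCardEq (by simp)).symm
  have pow_eq : ∀ x : Fin e → F, ∏ j, x (σ j).1 = ∏ p, x p ^ d p := by
    intro x
    rw [← Equiv.prod_comp σ.symm (fun j => x (σ j).1)]
    simp only [Equiv.apply_symm_apply]
    rw [← Finset.univ_sigma_univ, Finset.prod_sigma]
    simp [Finset.prod_const]
  have h := key hk g τ Γ hd1 (hG _ hd1 hd2) (fun j => u (σ j).1) A
  calc ∑ i, Γ A i * ∏ p, (∑ a, u p a * g a i) ^ d p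
      = ∑ i, Γ A i * ∏ j, (∑ a, u (σ j).1 a * g a i) := by
        refine Finset.sum_congr rfl fun i _ => ?_
        rw [pow_eq (fun p => ∑ a, u p a * g a i)]
    _ = τ A * ∏ j, u (σ j).1 (Fin.castLE hk A) := h
    _ = τ A * ∏ p, (u p (Fin.castLE hk A)) ^ d p := by
        rw [pow_eq (fun p => u p (Fin.castLE hk A))]
end

section
/- Let F_q be a finite field of characteristic 2, let C ⊆ F_q^N be a linear code of dimension m, let ℓ̄ ≥ 2, and let σ ∈ F_q^N be such that C has the strong ℓ̄-multiplication property with respect to σ and σ_1, …, σ_k are all nonzero, where k < m. Suppose further that the map C → F_q^k restricting a codeword to its first k coordinates is surjective. Then, with n = N − k, there exists an m×n matrix G over F_q that has the strong ℓ̄-orthogonality property with respect to (Γ, τ), where Γ = (σ_{k+1}, …, σ_N) ∈ F_q^n and τ = (σ_1, …, σ_k). -/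
/-- Let `F` be a finite field of characteristic 2 and `C ⊆ F^N` a
linear code of dimension `m` with the strong `ℓ̄`-multiplication property with respect
to `σ` (`ℓ̄ ≥ 2`), where `σ 1, …, σ k` are all nonzero and `k < m`.  If the restriction
of codewords to the first `k` coordinates is surjective onto `F^k`, then with
`n = N - k` there is an `m × n` matrix `G` with the strong `ℓ̄`-orthogonality property
with respect to `(Γ, τ)` where `Γ = (σ (k+1), …, σ N)` and `τ = (σ 1, …, σ k)`. -/
theorem stmt14 (F : Type*) [Field F] [Fintype F] [CharP F 2]
    (N m k ℓbar : ℕ) (hℓbar : 2 ≤ ℓbar) (hkm : k < m) (hkN : k ≤ N)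
    (C : Submodule F (Fin N → F)) (hdim : Module.finrank F C = m)
    (σ : Fin N → F)
    (hmult : ∀ ℓ, 1 ≤ ℓ → ℓ ≤ ℓbar → ∀ c : Fin ℓ → Fin N → F,
      (∀ j, c j ∈ C) → ∑ i, σ i * ∏ j, c j i = 0)
    (hσ : ∀ j : Fin k, σ (Fin.castLE hkN j) ≠ 0)
    (hsurj : Function.Surjective
      fun (c : C) (j : Fin k) => (c : Fin N → F) (Fin.castLE hkN j)) :
    ∃ G : Fin m → Fin (N - k) → F,
      ∀ ℓ, 1 ≤ ℓ → ℓ ≤ ℓbar → ∀ a : Fin ℓ → Fin m,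
        ((∀ A : Fin k, (∀ j, a j = Fin.castLE hkm.le A) →
            ∑ i : Fin (N - k), σ ⟨k + (i : ℕ), by have := i.isLt; omega⟩ * ∏ j, G (a j) i
              = σ (Fin.castLE hkN A)) ∧
          ((¬ ∃ A : Fin k, ∀ j, a j = Fin.castLE hkm.le A) →
            ∑ i : Fin (N - k), σ ⟨k + (i : ℕ), by have := i.isLt; omega⟩ * ∏ j, G (a j) i = 0)) := by
  choose w hw using fun A : Fin k => hsurj (Pi.single A (1 : F))
  have hw' : ∀ (A : Fin k) (i : Fin k),
      (w A : Fin N → F) (Fin.castLE hkN i) = if i = A then 1 else 0 := by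
    intro A i
    have := congrFun (hw A) i
    simpa [Pi.single_apply] using this
  set row : Fin m → Fin N → F :=
    fun b => if h : (b : ℕ) < k then (w ⟨b, h⟩ : Fin N → F) else 0 with hrow
  have hrowC : ∀ b : Fin m, row b ∈ C := by
    intro b
    simp only [hrow]
    split
    · exact (w _).2
    · exact C.zero_mem
  refine ⟨fun b i => row b ⟨k + (i : ℕ), by have := i.isLt; omega⟩, ?_⟩
  intro ℓ hℓ1 hℓ2 a
  have hN : k + (N - k) = N := by omega
  have hsum := hmult ℓ hℓ1 hℓ2 (fun j => row (a j)) (fun j => hrowC _)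
  set f : Fin N → F := fun i => σ i * ∏ j, row (a j) i with hf
  have hsplit : (∑ i : Fin k, f (Fin.castLE hkN i))
      + (∑ i : Fin (N - k), f ⟨k + (i : ℕ), by have := i.isLt; omega⟩) = 0 := by
    have h1 : ∑ i : Fin (k + (N - k)), f (Fin.cast hN i) = ∑ i : Fin N, f i :=
      Fintype.sum_equiv (finCongr hN) _ _ (fun i => rfl)
    rw [Fin.sum_univ_add] at h1
    have h2 : ∀ i : Fin k, f (Fin.cast hN (Fin.castAdd (N - k) i)) = f (Fin.castLE hkN i) :=
      fun i => rfl
    have h3 : ∀ i : Fin (N - k), f (Fin.cast hN (Fin.natAdd k i))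
        = f ⟨k + (i : ℕ), by have := i.isLt; omega⟩ := fun i => rfl
    simp only [h2, h3] at h1
    rw [h1]
    exact hsum
  constructor
  · intro A hA
    have hS1 : ∑ i : Fin k, f (Fin.castLE hkN i) = σ (Fin.castLE hkN A) := by
      have hrA : ∀ j : Fin ℓ, row (a j) = (w A : Fin N → F) := by
        intro j
        rw [hA j]
        simp only [hrow]
        have hlt : ((Fin.castLE hkm.le A : Fin m) : ℕ) < k := A.isLt
        rw [dif_pos hlt]
        congr 1
      have : ∀ i : Fin k, f (Fin.castLE hkN i)
          = σ (Fin.castLE hkN i) * (if i = A then 1 else 0) ^ ℓ := by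
        intro i
        simp only [hf, hrA, hw' A i, Finset.prod_const, Finset.card_univ, Fintype.card_fin]
      rw [Finset.sum_congr rfl (fun i _ => this i),
        Finset.sum_eq_single A (fun b _ hb => by rw [if_neg hb, zero_pow (by omega), mul_zero])
          (by simp), if_pos rfl, one_pow, mul_one]
    have := hsplit
    rw [hS1] at this
    have h4 : (∑ i : Fin (N - k), f ⟨k + (i : ℕ), by have := i.isLt; omega⟩)
        = σ (Fin.castLE hkN A) := by
      linear_combination this - CharTwo.add_self_eq_zero (σ (Fin.castLE hkN A))
    exact h4
  · intro hne
    push_neg at hne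
    have hS1 : ∑ i : Fin k, f (Fin.castLE hkN i) = 0 := by
      apply Finset.sum_eq_zero
      intro i _
      obtain ⟨j0, hj0⟩ := hne i
      have hprod : ∏ j, row (a j) (Fin.castLE hkN i) = 0 := by
        apply Finset.prod_eq_zero (Finset.mem_univ j0)
        simp only [hrow]
        split
        · rename_i h
          rw [hw', if_neg]
          intro hc
          exact hj0 (Fin.ext (congrArg Fin.val hc).symm)
        · rfl
      simp [hf, hprod]
    have := hsplit
    rw [hS1, zero_add] at this
    exact this
end

section
/- Fix natural numbers ℓ̄ ≥ 1, m, N, k with k ≤ m, and let n = N − k. Suppose m < 1 + n/ℓ̄ (equivalently ℓ̄·(m−1) < n), and let q be a prime power with q ≥ N. Then there exists an m×n matrix G over F_q with rows g^1, …, g^m such that: (1) G has the addressable strong ℓ̄-orthogonality property with respect to τ = (1,…,1) ∈ F_q^k; (2) every nonzero vector in the F_q-row space of G has Hamming weight at least n − m + 1; and (3) every nonzero vector v ∈ F_q^n satisfying Σ_{i=1}^n v_i g^a_i = 0 for all k < a ≤ m has Hamming weight at least m − k + 1. -/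
open Polynomial Finset

theorem stmt16_aux (ℓbar m n k : ℕ) (hℓbar : 1 ≤ ℓbar) (hkm : k ≤ m)
    (hm : ℓbar * (m - 1) < n)
    (F : Type*) [Field F] [DecidableEq F]
    (β : Fin k → F) (x : Fin n → F)
    (hβ : Function.Injective β) (hx : Function.Injective x)
    (hβx : ∀ A i, β A ≠ x i) :
    ∃ G : Fin m → Fin n → F,
      (∀ A : Fin k, ∃ ΓA : Fin n → F,
        ∀ ℓ, 1 ≤ ℓ → ℓ ≤ ℓbar → ∀ a : Fin ℓ → Fin m,
          ((∀ j, a j = Fin.castLE hkm A) → ∑ i, ΓA i * ∏ j, G (a j) i = 1) ∧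
          ((¬ ∀ j, a j = Fin.castLE hkm A) → ∑ i, ΓA i * ∏ j, G (a j) i = 0)) ∧
      (∀ v ∈ Submodule.span F (Set.range G), v ≠ 0 →
        n - m + 1 ≤ (Finset.univ.filter fun i => v i ≠ 0).card) ∧
      (∀ v : Fin n → F, v ≠ 0 →
        (∀ a : Fin m, k ≤ (a : ℕ) → ∑ i, v i * G a i = 0) →
        m - k + 1 ≤ (Finset.univ.filter fun i => v i ≠ 0).card) := by
  classical
  set Z : F[X] := Lagrange.nodal Finset.univ β with hZ
  set p : Fin m → F[X] := fun a =>
    if h : (a : ℕ) < k then Lagrange.basis Finset.univ β ⟨a, h⟩ else Z * X ^ ((a : ℕ) - k)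
    with hp
  have hβinj : Set.InjOn β (Finset.univ : Finset (Fin k)) := hβ.injOn
  have hxinj : Set.InjOn x (Finset.univ : Finset (Fin n)) := hx.injOn
  have hZdeg : Z.natDegree = k := by
    rw [hZ, Lagrange.natDegree_nodal]; simp
  have hpdeg : ∀ a, (p a).natDegree ≤ m - 1 := by
    intro a
    rw [hp]
    beta_reduce
    by_cases h : (a : ℕ) < k
    · rw [dif_pos h, Lagrange.natDegree_basis hβinj (mem_univ _)]
      simp only [card_univ, Fintype.card_fin]
      omega
    · rw [dif_neg h]
      refine le_trans (natDegree_mul_le) ?_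
      rw [hZdeg, natDegree_X_pow]
      have := a.2
      omega
  have hpeval : ∀ (a : Fin m) (B : Fin k),
      (p a).eval (β B) = if a = Fin.castLE hkm B then 1 else 0 := by
    intro a B
    rw [hp]
    beta_reduce
    by_cases h : (a : ℕ) < k
    · rw [dif_pos h]
      by_cases hab : a = Fin.castLE hkm B
      · have : (⟨(a : ℕ), h⟩ : Fin k) = B := by
          apply Fin.ext; simp [hab]
        rw [if_pos hab, this, Lagrange.eval_basis_self hβinj (mem_univ _)]
      · have hne : (⟨(a : ℕ), h⟩ : Fin k) ≠ B := by
          intro hEq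
          apply hab
          apply Fin.ext
          simpa using congrArg Fin.val hEq
        rw [if_neg hab, Lagrange.eval_basis_of_ne hne (mem_univ _)]
    · rw [dif_neg h]
      have hab : a ≠ Fin.castLE hkm B := by
        intro hEq
        apply h
        rw [hEq]
        simpa using B.2
      rw [if_neg hab, eval_mul, hZ, Lagrange.eval_nodal_at_node (mem_univ B), zero_mul]
  have hZx : ∀ i, Z.eval (x i) ≠ 0 := by
    intro i
    rw [hZ, Lagrange.eval_nodal]
    refine Finset.prod_ne_zero_iff.mpr fun A _ => ?_
    rw [sub_ne_zero]
    exact fun h => hβx A i h.symm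
  have hcardn : (#(Finset.univ : Finset (Fin n)) : WithBot ℕ) = (n : WithBot ℕ) := by
    simp
  have key : ∀ (A : Fin k) (f : F[X]), f.natDegree < n →
      ∑ i, (Lagrange.basis Finset.univ x i).eval (β A) * f.eval (x i) = f.eval (β A) := by
    intro A f hf
    have hdeg : f.degree < (#(Finset.univ : Finset (Fin n)) : WithBot ℕ) := by
      rw [hcardn]
      exact lt_of_le_of_lt degree_le_natDegree (by exact_mod_cast hf)
    conv_rhs => rw [Lagrange.eq_interpolate hxinj hdeg]
    rw [Lagrange.interpolate_apply, eval_finset_sum]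
    refine Finset.sum_congr rfl fun i _ => ?_
    rw [eval_mul, eval_C]; ring
  refine ⟨fun a i => (p a).eval (x i), ?_, ?_, ?_⟩
  · -- (1) addressable strong orthogonality
    intro A
    refine ⟨fun i => (Lagrange.basis Finset.univ x i).eval (β A), ?_⟩
    intro ℓ h1 hℓ a
    have hPdeg : (∏ j, p (a j)).natDegree < n := by
      calc (∏ j, p (a j)).natDegree ≤ ∑ j, (p (a j)).natDegree :=
            natDegree_prod_le _ _
        _ ≤ ∑ _j : Fin ℓ, (m - 1) := Finset.sum_le_sum fun j _ => hpdeg (a j)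
        _ = ℓ * (m - 1) := by simp [Finset.sum_const, mul_comm]
        _ ≤ ℓbar * (m - 1) := Nat.mul_le_mul_right _ hℓ
        _ < n := hm
    have main : ∑ i, (Lagrange.basis Finset.univ x i).eval (β A) * ∏ j, (p (a j)).eval (x i)
        = ∏ j, (p (a j)).eval (β A) := by
      simp only [← eval_prod]
      exact key A _ hPdeg
    constructor
    · intro hall
      rw [main]
      refine Finset.prod_eq_one fun j _ => ?_
      rw [hpeval, if_pos (hall j)]
    · intro hnall
      push_neg at hnall
      obtain ⟨j0, hj0⟩ := hnall
      rw [main]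
      exact Finset.prod_eq_zero (mem_univ j0) (by rw [hpeval, if_neg hj0])
  · -- (2) row-space minimum distance
    intro v hv hv0
    rw [Submodule.mem_span_range_iff_exists_fun] at hv
    obtain ⟨c, hc⟩ := hv
    set f : F[X] := ∑ a, Polynomial.C (c a) * p a with hf
    have hvf : ∀ i, v i = f.eval (x i) := by
      intro i
      rw [← hc, hf]
      simp [eval_finset_sum]
    have hfne : f ≠ 0 := by
      intro h0
      exact hv0 (funext fun i => by rw [hvf i, h0, eval_zero]; rfl)
    have hm0 : m ≠ 0 := by
      rintro rfl
      exact hfne (by rw [hf]; exact Finset.sum_of_isEmpty _)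
    have hfdeg : f.natDegree ≤ m - 1 := by
      rw [hf]
      exact natDegree_sum_le_of_forall_le _ _ fun a _ =>
        le_trans (natDegree_C_mul_le _ _) (hpdeg a)
    have hm1 : m - 1 < n := lt_of_le_of_lt (Nat.le_mul_of_pos_left _ hℓbar) hm
    have hzero : (Finset.univ.filter fun i => v i = 0).card ≤ m - 1 := by
      have h1 : ((Finset.univ.filter fun i => v i = 0).image x).card
          = (Finset.univ.filter fun i => v i = 0).card :=
        Finset.card_image_of_injective _ hx
      have h2 : (Finset.univ.filter fun i => v i = 0).image x ⊆ f.roots.toFinset := by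
        intro y hy
        rw [Finset.mem_image] at hy
        obtain ⟨i, hi, rfl⟩ := hy
        rw [Finset.mem_filter] at hi
        rw [Multiset.mem_toFinset, mem_roots hfne]
        exact (hvf i ▸ hi.2 : f.eval (x i) = 0)
      calc (Finset.univ.filter fun i => v i = 0).card
          = ((Finset.univ.filter fun i => v i = 0).image x).card := h1.symm
        _ ≤ f.roots.toFinset.card := Finset.card_le_card h2
        _ ≤ Multiset.card f.roots := Multiset.toFinset_card_le _
        _ ≤ f.natDegree := f.card_roots'
        _ ≤ m - 1 := hfdeg
    have hsplit : (Finset.univ.filter fun i => v i = 0).card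
        + (Finset.univ.filter fun i => v i ≠ 0).card = n := by
      rw [Finset.card_filter_add_card_filter_not]
      simp
    omega
  · -- (3) dual distance of the bottom rows
    intro v hv0 hEq
    by_contra hcon
    push_neg at hcon
    set T := Finset.univ.filter fun i => v i ≠ 0 with hT
    obtain ⟨i0, hi0⟩ : T.Nonempty := by
      obtain ⟨i, hi⟩ := Function.ne_iff.mp hv0
      refine ⟨i, ?_⟩
      simp only [hT, Finset.mem_filter, Finset.mem_univ, true_and]
      simp at hi; exact hi
    have hvi0 : v i0 ≠ 0 := by
      rw [hT, Finset.mem_filter] at hi0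
      exact hi0.2
    have hs1 : 1 ≤ T.card := Finset.card_pos.mpr ⟨i0, hi0⟩
    have hsle : T.card ≤ m - k := by omega
    set f := Lagrange.basis T x i0 with hfdef
    have hfd : f.natDegree ≤ m - k - 1 := by
      rw [hfdef, Lagrange.natDegree_basis hx.injOn hi0]
      omega
    have hvan : ∀ d, d < m - k → ∑ i, v i * (Z.eval (x i) * (x i) ^ d) = 0 := by
      intro d hd
      have hdm : k + d < m := by omega
      have hG : ∀ i, (p (⟨k + d, hdm⟩ : Fin m)).eval (x i) = Z.eval (x i) * (x i) ^ d := by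
        intro i
        rw [hp]
        simp only [dif_neg (by omega : ¬ (k + d) < k)]
        rw [Nat.add_sub_cancel_left, eval_mul, eval_pow, eval_X]
      have := hEq ⟨k + d, hdm⟩ (by simp)
      calc ∑ i, v i * (Z.eval (x i) * (x i) ^ d)
          = ∑ i, v i * (p (⟨k + d, hdm⟩ : Fin m)).eval (x i) := by
            refine Finset.sum_congr rfl fun i _ => ?_
            rw [hG]
        _ = 0 := this
    have hvf : ∑ i, v i * (Z.eval (x i) * f.eval (x i)) = 0 := by
      have hfd' : f.natDegree < m - k := by omega
      calc ∑ i, v i * (Z.eval (x i) * f.eval (x i))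
          = ∑ i, ∑ d ∈ Finset.range (m - k), v i * (Z.eval (x i) * (f.coeff d * (x i) ^ d)) := by
            refine Finset.sum_congr rfl fun i _ => ?_
            rw [eval_eq_sum_range' hfd' (x i), Finset.mul_sum, Finset.mul_sum]
        _ = ∑ d ∈ Finset.range (m - k), ∑ i, v i * (Z.eval (x i) * (f.coeff d * (x i) ^ d)) :=
            Finset.sum_comm
        _ = ∑ d ∈ Finset.range (m - k), f.coeff d * ∑ i, v i * (Z.eval (x i) * (x i) ^ d) := by
            refine Finset.sum_congr rfl fun d _ => ?_
            rw [Finset.mul_sum]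
            refine Finset.sum_congr rfl fun i _ => ?_
            ring
        _ = 0 := by
            refine Finset.sum_eq_zero fun d hd => ?_
            rw [hvan d (Finset.mem_range.mp hd), mul_zero]
    have hvf2 : ∑ i, v i * (Z.eval (x i) * f.eval (x i)) = v i0 * Z.eval (x i0) := by
      rw [← Finset.sum_subset (Finset.subset_univ T) (fun i _ hiT => by
        have : v i = 0 := by
          by_contra hne
          exact hiT (by simp [hT, hne])
        rw [this, zero_mul])]
      rw [Finset.sum_eq_single i0 (fun i hi hne => by
        rw [hfdef, Lagrange.eval_basis_of_ne (Ne.symm hne) hi, mul_zero, mul_zero])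
        (fun h => absurd hi0 h)]
      rw [hfdef, Lagrange.eval_basis_self hx.injOn hi0, mul_one]
    rw [hvf] at hvf2
    exact (mul_ne_zero hvi0 (hZx i0)) hvf2.symm


/-- Fix `ℓ̄ ≥ 1`, `m`, `N`, `k ≤ m` and set `n = N - k`.  Suppose
`ℓ̄ (m - 1) < n` (equivalently `m < 1 + n/ℓ̄`) and let `F` be a finite field of
(prime power) order at least `N`.  Then there is an `m × n` matrix `G` over `F`
(rows `g^1, …, g^m`) such that:
(1) `G` has the addressable strong `ℓ̄`-orthogonality property with respect to
`τ = (1, …, 1) ∈ F^k`;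
(2) every nonzero vector in the row space of `G` has Hamming weight at least
`n - m + 1`;
(3) every nonzero `v ∈ F^n` with `∑ i, v i * g^a i = 0` for all `k < a ≤ m` has
Hamming weight at least `m - k + 1`. -/
theorem stmt16 (ℓbar m N k : ℕ) (hℓbar : 1 ≤ ℓbar) (hkm : k ≤ m)
    (hm : ℓbar * (m - 1) < N - k)
    (F : Type*) [Field F] [Fintype F] [DecidableEq F]
    (hq : N ≤ Fintype.card F) :
    ∃ G : Fin m → Fin (N - k) → F,
      (∀ A : Fin k, ∃ ΓA : Fin (N - k) → F,
        ∀ ℓ, 1 ≤ ℓ → ℓ ≤ ℓbar → ∀ a : Fin ℓ → Fin m,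
          ((∀ j, a j = Fin.castLE hkm A) → ∑ i, ΓA i * ∏ j, G (a j) i = 1) ∧
          ((¬ ∀ j, a j = Fin.castLE hkm A) → ∑ i, ΓA i * ∏ j, G (a j) i = 0)) ∧
      (∀ v ∈ Submodule.span F (Set.range G), v ≠ 0 →
        (N - k) - m + 1 ≤ (Finset.univ.filter fun i => v i ≠ 0).card) ∧
      (∀ v : Fin (N - k) → F, v ≠ 0 →
        (∀ a : Fin m, k ≤ (a : ℕ) → ∑ i, v i * G a i = 0) →
        m - k + 1 ≤ (Finset.univ.filter fun i => v i ≠ 0).card) := by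
  have hn : 0 < N - k := lt_of_le_of_lt (Nat.zero_le _) hm
  have hkN : k < N := by omega
  obtain ⟨e⟩ : Nonempty (Fin N ↪ F) :=
    Function.Embedding.nonempty_of_card_le (by simpa using hq)
  exact stmt16_aux ℓbar m (N - k) k hℓbar hkm hm F
    (fun A => e ⟨A, lt_trans A.2 hkN⟩) (fun i => e ⟨k + i, by omega⟩)
    (fun A B hAB => by
      have := e.injective hAB
      exact Fin.ext (by simpa using congrArg Fin.val this))
    (fun i j hij => by
      have := e.injective hij
      exact Fin.ext (by have := congrArg Fin.val this; simp at this; omega))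
    (fun A i h => by
      have := congrArg Fin.val (e.injective h)
      simp at this
      omega)
end

section
/- Let y_1, …, y_m ∈ {0,1} ⊆ ℤ and let s ∈ {0,1} be the parity of Σ_{a=1}^m y_a (i.e., s ≡ Σ_a y_a (mod 2)). Then, as integers, s ≡ Σ_{a=1}^m y_a − 2·Σ_{1 ≤ a < b ≤ m} y_a y_b + 4·Σ_{1 ≤ a < b < c ≤ m} y_a y_b y_c (mod 8). -/
/-!
For `0/1`-valued `y` with `k` ones, the pair and triple sums are `k.choose 2` and `k.choose 3`,
so the right-hand side is `f k = k - 2 * k.choose 2 + 4 * k.choose 3`. Pascal's rule gives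
`f (k + 2) = f k + 8 * k.choose 2`, and `f 0 = 0`, `f 1 = 1`; hence `f k ≡ k % 2 [ZMOD 8]`.
-/

section ProductSums

variable {R : Type*} [CommSemiring R] {m : ℕ}

def pairProductSum (y : Fin m → R) : R :=
  ∑ a, ∑ b, if a < b then y a * y b else 0

def tripleProductSum (y : Fin m → R) : R :=
  ∑ a, ∑ b, ∑ c, if a < b ∧ b < c then y a * y b * y c else 0

private theorem not_last_lt_castSucc (i : Fin m) : ¬ Fin.last m < i.castSucc :=
  not_lt.2 (Fin.castSucc_lt_last i).le

theorem pairProductSum_succ (y : Fin (m + 1) → R) :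
    pairProductSum y
      = pairProductSum (y ∘ Fin.castSucc) + (∑ a : Fin m, y a.castSucc) * y (Fin.last m) := by
  simp [pairProductSum, Fin.sum_univ_castSucc, Fin.castSucc_lt_last, not_last_lt_castSucc,
    Finset.sum_add_distrib, Finset.sum_mul]

theorem tripleProductSum_succ (y : Fin (m + 1) → R) :
    tripleProductSum y
      = tripleProductSum (y ∘ Fin.castSucc) + pairProductSum (y ∘ Fin.castSucc) * y (Fin.last m) := by
  simp [tripleProductSum, pairProductSum, Fin.sum_univ_castSucc, Fin.castSucc_lt_last,
    not_last_lt_castSucc, Finset.sum_add_distrib, Finset.sum_mul]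

end ProductSums

theorem exists_sum_eq_and_productSums_eq_choose {m : ℕ} (y : Fin m → ℤ)
    (hy : ∀ a, y a = 0 ∨ y a = 1) :
    ∃ k : ℕ, ∑ a, y a = k ∧ pairProductSum y = k.choose 2 ∧ tripleProductSum y = k.choose 3 := by
  induction m with
  | zero => exact ⟨0, by simp [pairProductSum, tripleProductSum]⟩
  | succ m ih =>
    obtain ⟨k, hsum, hpair, htriple⟩ := ih (y ∘ Fin.castSucc) (fun a => hy a.castSucc)
    simp only [Function.comp_apply] at hsum
    rw [pairProductSum_succ, tripleProductSum_succ, Fin.sum_univ_castSucc, hsum, hpair, htriple]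
    rcases hy (Fin.last m) with hlast | hlast <;> rw [hlast]
    · exact ⟨k, by simp⟩
    · refine ⟨k + 1, ?_⟩
      simp only [Nat.choose_succ_succ', Nat.choose_one_right]
      push_cast
      refine ⟨rfl, ?_, ?_⟩ <;> ring

theorem natCast_emod_two_modEq_choose (k : ℕ) :
    (k : ℤ) % 2 ≡ k - 2 * k.choose 2 + 4 * k.choose 3 [ZMOD 8] := by
  induction k using Nat.twoStepInduction with
  | zero => rfl
  | one => rfl
  | more k ih _ =>
    have hstep : ((k + 2 : ℕ) : ℤ) - 2 * (k + 2).choose 2 + 4 * (k + 2).choose 3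
        = (k - 2 * k.choose 2 + 4 * k.choose 3) + 8 * k.choose 2 := by
      simp only [Nat.choose_succ_succ', Nat.choose_zero_right, zero_add, Nat.choose_one_right,
        Nat.reduceAdd]
      push_cast
      ring
    rw [hstep]
    unfold Int.ModEq at *
    omega

/-- Let `y 1, …, y m ∈ {0,1} ⊆ ℤ` and let `s ∈ {0,1}` be the parity
of `∑ a, y a`.  Then, as integers,
`s ≡ ∑ a, y a - 2 ∑_{a<b} y a y b + 4 ∑_{a<b<c} y a y b y c (mod 8)`. -/
theorem stmt17 (m : ℕ) (y : Fin m → ℤ) (hy : ∀ a, y a = 0 ∨ y a = 1)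
    (s : ℤ) (hs01 : s = 0 ∨ s = 1) (hs : s ≡ ∑ a, y a [ZMOD 2]) :
    s ≡ (∑ a, y a)
          - 2 * (∑ a, ∑ b, if a < b then y a * y b else 0)
          + 4 * (∑ a, ∑ b, ∑ c, if a < b ∧ b < c then y a * y b * y c else 0)
        [ZMOD 8] := by
  obtain ⟨k, hsum, hpair, htriple⟩ := exists_sum_eq_and_productSums_eq_choose y hy
  have hs_eq : s = (k : ℤ) % 2 := by
    rw [hsum, Int.ModEq] at hs
    omega
  change s ≡ ∑ a, y a - 2 * pairProductSum y + 4 * tripleProductSum y [ZMOD 8]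
  rw [hs_eq, hsum, hpair, htriple]
  exact natCast_emod_two_modEq_choose k
end
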